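/- Every Pareto-optimal allocation is sequenceable. Equivalently, every non-sequenceable allocation is Pareto-dominated by some other allocation. -/
import Mathlib


open Finset

variable {A O : Type*}

/-- A sub-allocation on `O'` is frustrating if no agent receives (within `O'`)
one of her top objects of `O'`: every object of `O'` is non-top for its owner. -/
def Frustrating (W : A → O → ℝ) (π : O → A) (O' : Finset O) : Prop :=
  ∀ ℓ ∈ O', ∃ m ∈ O', W (π ℓ) ℓ < W (π ℓ) m

/-- The sequence `σ` generates `π`: there is an order in which the objects are
picked such that at step `t`, agent `σ t` picks object `ord t`, which she owns in `π`,
and which has maximal weight for her among the remaining objects `ord s`, `s ≥ t`. -/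
def Generates {M : ℕ} (W : A → O → ℝ) (σ : Fin M → A) (π : O → A) : Prop :=
  ∃ ord : Fin M ≃ O,
    (∀ t, π (ord t) = σ t) ∧
    ∀ t s : Fin M, t ≤ s → W (σ t) (ord s) ≤ W (σ t) (ord t)

/-- An allocation is sequenceable if some sequence of sincere choices generates it. -/
def Sequenceable (W : A → O → ℝ) (π : O → A) : Prop :=
  ∃ (M : ℕ) (σ : Fin M → A), Generates W σ π

/-- Additive utility of a bundle. -/
noncomputable def util (W : A → O → ℝ) (i : A) (S : Finset O) : ℝ := ∑ ℓ ∈ S, W i ℓ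

/-- The share of agent `i` in allocation `π`. -/
def share [Fintype O] [DecidableEq A] (π : O → A) (i : A) : Finset O :=
  Finset.univ.filter (fun ℓ => π ℓ = i)

/-- `π'` Pareto-dominates `π` (additive utilities). -/
def Dominates [Fintype O] [DecidableEq A] (W : A → O → ℝ) (π' π : O → A) : Prop :=
  (∀ i, util W i (share π i) ≤ util W i (share π' i)) ∧
  ∃ j, util W j (share π j) < util W j (share π' j)

def ParetoOptimal [Fintype O] [DecidableEq A] (W : A → O → ℝ) (π : O → A) : Prop :=
  ¬ ∃ π' : O → A, Dominates W π' π

def EnvyFree [Fintype O] [DecidableEq A] (W : A → O → ℝ) (π : O → A) : Prop :=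
  ∀ i j, util W i (share π j) ≤ util W i (share π i)

/-- `(π, p)` forms a competitive equilibrium from equal incomes. -/
def IsCEEIWith [Fintype O] [DecidableEq A] (W : A → O → ℝ) (π : O → A) (p : O → ℝ) : Prop :=
  (∀ ℓ, 0 ≤ p ℓ ∧ p ℓ ≤ 1) ∧
  ∀ i, (∑ ℓ ∈ share π i, p ℓ) ≤ 1 ∧
    ∀ S : Finset O, (∑ ℓ ∈ S, p ℓ) ≤ 1 → util W i S ≤ util W i (share π i)

def IsCEEI [Fintype O] [DecidableEq A] (W : A → O → ℝ) (π : O → A) : Prop :=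
  ∃ p : O → ℝ, IsCEEIWith W π p

lemma exists_good_list [DecidableEq O] (W : A → O → ℝ) (π : O → A) :
    ∀ O' : Finset O, (∀ O'' ⊆ O', O''.Nonempty → ¬ Frustrating W π O'') →
    ∃ L : List O, L.Nodup ∧ L.toFinset = O' ∧
      L.Pairwise (fun a b => W (π a) b ≤ W (π a) a) := by
  intro O'
  induction O' using Finset.strongInduction with
  | _ O' ih =>
    intro hfr
    rcases O'.eq_empty_or_nonempty with rfl | hne
    · exact ⟨[], by simp⟩
    · have hnf := hfr O' le_rfl hne
      rw [Frustrating] at hnf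
      push_neg at hnf
      obtain ⟨ℓ, hℓ, htop⟩ := hnf
      have hss : O'.erase ℓ ⊂ O' := Finset.erase_ssubset hℓ
      obtain ⟨L', hnd, htf, hpw⟩ := ih (O'.erase ℓ) hss
        (fun S hS hSne => hfr S (hS.trans (Finset.erase_subset _ _)) hSne)
      refine ⟨ℓ :: L', ?_, ?_, ?_⟩
      · refine List.nodup_cons.mpr ⟨?_, hnd⟩
        intro hmem
        have : ℓ ∈ O'.erase ℓ := htf ▸ List.mem_toFinset.mpr hmem
        exact (Finset.notMem_erase ℓ O') this
      · rw [List.toFinset_cons, htf, Finset.insert_erase hℓ]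
      · refine List.pairwise_cons.mpr ⟨?_, hpw⟩
        intro b hb
        have : b ∈ O'.erase ℓ := htf ▸ List.mem_toFinset.mpr hb
        exact htop b (Finset.mem_of_mem_erase this)

lemma frustrating_dominates [Fintype O] [DecidableEq A] (W : A → O → ℝ) (π : O → A)
    (O' : Finset O) (hne : O'.Nonempty) (hf : Frustrating W π O') :
    ∃ π' : O → A, Dominates W π' π := by
  classical
  -- the "better object" map
  have hb : ∀ x : O, ∃ y : O, (x ∈ O' → y ∈ O' ∧ W (π x) x < W (π x) y) ∧ (x ∉ O' → y = x) := by
    intro x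
    by_cases hx : x ∈ O'
    · obtain ⟨m, hm, hlt⟩ := hf x hx
      exact ⟨m, fun _ => ⟨hm, hlt⟩, fun h => absurd hx h⟩
    · exact ⟨x, fun h => absurd h hx, fun _ => rfl⟩
  choose f hf1 hf2 using hb
  -- iterates of points of O' stay in O'
  have hiter : ∀ x ∈ O', ∀ n, f^[n] x ∈ O' := by
    intro x hx n
    induction n with
    | zero => simpa using hx
    | succ n ih => rw [Function.iterate_succ_apply']; exact (hf1 _ ih).1
  -- periodic points
  set P : Set O := {x | ∃ n, 0 < n ∧ f^[n] x = x} with hP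
  have hfP : ∀ x ∈ P, f x ∈ P := by
    rintro x ⟨n, hn, hfx⟩
    exact ⟨n, hn, by rw [← Function.iterate_succ_apply, Function.iterate_succ_apply', hfx]⟩
  -- f is injective on P
  have hinjP : ∀ x ∈ P, ∀ y ∈ P, f x = f y → x = y := by
    rintro x ⟨n, hn, hx⟩ y ⟨m, hm, hy⟩ hxy
    have hxN : f^[n * m] x = x := by rw [Function.iterate_mul]; exact Function.iterate_fixed hx m
    have hyN : f^[n * m] y = y := by
      rw [mul_comm, Function.iterate_mul]; exact Function.iterate_fixed hy n
    have hNpos : 0 < n * m := Nat.mul_pos hn hm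
    calc x = f^[n * m] x := hxN.symm
      _ = f^[n * m - 1] (f x) := by
          rw [← Function.iterate_succ_apply]; congr 1; omega
      _ = f^[n * m - 1] (f y) := by rw [hxy]
      _ = f^[n * m] y := by
          rw [← Function.iterate_succ_apply]; congr 1; omega
      _ = y := hyN
  -- existence of a periodic point in O'
  obtain ⟨x0, hx0⟩ := hne
  obtain ⟨a, b, hab, heq⟩ := Finite.exists_ne_map_eq_of_infinite (fun n : ℕ => f^[n] x0)
  have key : ∃ y, y ∈ O' ∧ y ∈ P := by
    rcases hab.lt_or_gt with h | h
    · refine ⟨f^[a] x0, hiter x0 hx0 a, b - a, Nat.sub_pos_of_lt h, ?_⟩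
      rw [← Function.iterate_add_apply, Nat.sub_add_cancel h.le]; exact heq.symm
    · refine ⟨f^[b] x0, hiter x0 hx0 b, a - b, Nat.sub_pos_of_lt h, ?_⟩
      rw [← Function.iterate_add_apply, Nat.sub_add_cancel h.le]; exact heq
  obtain ⟨y, hyO, hyP⟩ := key
  -- the permutation
  set h : O → O := fun x => if x ∈ P then f x else x with hh
  have hinj : Function.Injective h := by
    intro x y hxy
    by_cases hx : x ∈ P <;> by_cases hy' : y ∈ P <;> simp only [hh, hx, hy', if_pos, if_neg,
      ite_true, ite_false] at hxy
    · exact hinjP x hx y hy' hxy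
    · exact absurd (hxy ▸ hfP x hx) hy'
    · exact absurd (hxy.symm ▸ hfP y hy') hx
    · exact hxy
  have hbij : Function.Bijective h := Finite.injective_iff_bijective.mp hinj
  set e : O ≃ O := Equiv.ofBijective h hbij with he
  -- key pointwise inequalities
  have hge : ∀ ℓ : O, W (π ℓ) ℓ ≤ W (π ℓ) (e ℓ) := by
    intro ℓ
    show W (π ℓ) ℓ ≤ W (π ℓ) (h ℓ)
    by_cases hℓ : ℓ ∈ P
    · simp only [hh, if_pos hℓ]
      by_cases hO : ℓ ∈ O'
      · exact (hf1 ℓ hO).2.le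
      · rw [hf2 ℓ hO]
    · simp [hh, if_neg hℓ]
  have hgt : W (π y) y < W (π y) (e y) := by
    show W (π y) y < W (π y) (h y)
    simp only [hh, if_pos hyP]
    exact (hf1 y hyO).2
  refine ⟨fun m => π (e.symm m), ?_, ?_⟩
  · intro i
    have hshare : share (fun m => π (e.symm m)) i = (share π i).image e := by
      ext m
      simp only [share, mem_filter, mem_univ, true_and, mem_image]
      constructor
      · intro hm; exact ⟨e.symm m, hm, e.apply_symm_apply m⟩
      · rintro ⟨ℓ, hℓ, rfl⟩; simpa using hℓ
    rw [hshare, util, util, Finset.sum_image (fun a _ b _ hab => e.injective hab)]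
    refine Finset.sum_le_sum fun ℓ hℓ => ?_
    have : π ℓ = i := by simpa [share] using hℓ
    rw [← this]; exact hge ℓ
  · refine ⟨π y, ?_⟩
    have hshare : share (fun m => π (e.symm m)) (π y) = (share π (π y)).image e := by
      ext m
      simp only [share, mem_filter, mem_univ, true_and, mem_image]
      constructor
      · intro hm; exact ⟨e.symm m, hm, e.apply_symm_apply m⟩
      · rintro ⟨ℓ, hℓ, rfl⟩; simpa using hℓ
    rw [hshare, util, util, Finset.sum_image (fun a _ b _ hab => e.injective hab)]
    refine Finset.sum_lt_sum (fun ℓ hℓ => ?_) ⟨y, ?_, hgt⟩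
    · have : π ℓ = π y := by simpa [share] using hℓ
      rw [← this]; exact hge ℓ
    · simp [share]

/-- Every Pareto-optimal allocation is sequenceable. -/
theorem paretoOptimal_imp_sequenceable [Fintype O] [DecidableEq A]
    (W : A → O → ℝ) (π : O → A) (h : ParetoOptimal W π) :
    Sequenceable W π := by
  classical
  have hfr : ∀ O'' ⊆ (univ : Finset O), O''.Nonempty → ¬ Frustrating W π O'' := by
    intro O'' _ hne hF
    exact h ⟨_, frustrating_dominates W π O'' hne hF |>.choose_spec⟩
  obtain ⟨L, hnd, htf, hpw⟩ := exists_good_list W π univ hfr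
  have hmem : ∀ x : O, x ∈ L := fun x => by
    have : x ∈ L.toFinset := htf ▸ mem_univ x
    simpa using this
  set ord := List.Nodup.getEquivOfForallMemList L hnd hmem with hord
  have hord_apply : ∀ t, ord t = L.get t := fun t => rfl
  refine ⟨L.length, fun t => π (ord t), ord, fun t => rfl, ?_⟩
  intro t s hts
  rcases eq_or_lt_of_le hts with rfl | hlt
  · exact le_refl _
  · show W (π (ord t)) (ord s) ≤ W (π (ord t)) (ord t)
    rw [hord_apply, hord_apply]
    exact List.pairwise_iff_get.mp hpw t s hlt
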